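/- Let γ > 0 and τ ∈ ℝ^{d×d}_s. Define p := τ − max{0, 1 − γ/|τ^D|}·τ^D when τ^D ≠ 0, and p := τ when τ^D = 0. Then p ∈ K, and |τ − p| ≤ |τ − σ| for every σ ∈ K, with equality only if σ = p; in other words, p is the unique nearest point of K to τ in the Frobenius norm. -/

import Mathlib

/-!
The deviator is the orthogonal projection `P` onto the trace-free matrices for the Frobenius
inner product, so `K` is the cylinder `{σ | ‖P σ‖ ≤ γ}` over a ball, and `p` only pulls the
component `P τ` radially into that ball. Since `τ - p` lies in the range of `P`, Cauchy–Schwarz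
gives the variational inequality `⟪τ - p, σ - p⟫ ≤ 0` for `σ ∈ K`, and expanding
`‖τ - σ‖² = ‖(τ - p) - (σ - p)‖²` yields `‖τ - p‖² + ‖σ - p‖² ≤ ‖τ - σ‖²`: minimality and
uniqueness at once.
-/

open scoped Classical

/-- The Frobenius inner product `σ : τ = trace (σ τ)` on (symmetric) matrices. -/
noncomputable def frob {d : ℕ} (A B : Matrix (Fin d) (Fin d) ℝ) : ℝ :=
  Matrix.trace (A * B)

/-- The norm induced by the Frobenius inner product (on symmetric matrices). -/
noncomputable def fnorm {d : ℕ} (A : Matrix (Fin d) (Fin d) ℝ) : ℝ :=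
  Real.sqrt (frob A A)

/-- The deviator `τ^D = τ - (trace τ / d) • I`. -/
noncomputable def dev {d : ℕ} (A : Matrix (Fin d) (Fin d) ℝ) : Matrix (Fin d) (Fin d) ℝ :=
  A - (Matrix.trace A / (d : ℝ)) • (1 : Matrix (Fin d) (Fin d) ℝ)

/-- The smoothed max function `max_s`. -/
noncomputable def maxs (s r : ℝ) : ℝ :=
  if s ≤ |r| then max 0 r else (r + s) ^ 2 / (4 * s)

/-- The smoothed von Mises resolvent `R_s`. -/
noncomputable def Rs {d : ℕ} (s γ : ℝ) (τ : Matrix (Fin d) (Fin d) ℝ) :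
    Matrix (Fin d) (Fin d) ℝ :=
  if dev τ = 0 then τ else τ - maxs s (1 - γ / fnorm (dev τ)) • dev τ

/-- The projection `π_K` onto the von Mises admissible set
`K = {σ symmetric : |σ^D| ≤ γ}`. -/
noncomputable def projK {d : ℕ} (γ : ℝ) (τ : Matrix (Fin d) (Fin d) ℝ) :
    Matrix (Fin d) (Fin d) ℝ :=
  if dev τ = 0 then τ else τ - max 0 (1 - γ / fnorm (dev τ)) • dev τ

open scoped RealInnerProductSpace

section NearestPoint

variable {E : Type*} [NormedAddCommGroup E] [InnerProductSpace ℝ E] {x p y : E}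

theorem norm_sub_sq_add_norm_sub_sq_le_of_inner_nonpos (h : ⟪x - p, y - p⟫ ≤ 0) :
    ‖x - p‖ ^ 2 + ‖y - p‖ ^ 2 ≤ ‖x - y‖ ^ 2 := by
  rw [show x - y = (x - p) - (y - p) by abel, norm_sub_sq_real (x - p) (y - p)]
  linarith

theorem norm_sub_le_of_inner_nonpos (h : ⟪x - p, y - p⟫ ≤ 0) : ‖x - p‖ ≤ ‖x - y‖ := by
  refine (pow_le_pow_iff_left₀ (norm_nonneg _) (norm_nonneg _) two_ne_zero).1 ?_
  nlinarith [norm_sub_sq_add_norm_sub_sq_le_of_inner_nonpos h]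

theorem eq_of_inner_nonpos_of_norm_sub_eq (h : ⟪x - p, y - p⟫ ≤ 0)
    (heq : ‖x - p‖ = ‖x - y‖) : y = p := by
  have hsq := norm_sub_sq_add_norm_sub_sq_le_of_inner_nonpos h
  rw [heq] at hsq
  rw [← sub_eq_zero, ← norm_eq_zero]
  nlinarith [norm_nonneg (y - p)]

end NearestPoint

theorem one_sub_max_mul_le {γ N : ℝ} (hγ : 0 ≤ γ) (hN : 0 ≤ N) :
    (1 - max 0 (1 - γ / N)) * N ≤ γ := by
  rcases hN.eq_or_lt with rfl | hN
  · simpa using hγ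
  rcases le_total (1 - γ / N) 0 with h | h
  · rw [max_eq_left h, sub_zero, one_mul]
    rwa [sub_nonpos, le_div_iff₀ hN, one_mul] at h
  · rw [max_eq_right h, sub_sub_cancel, div_mul_cancel₀ _ hN.ne']

theorem max_mul_mul_sub_eq_zero (γ N : ℝ) :
    max 0 (1 - γ / N) * N * (γ - (1 - max 0 (1 - γ / N)) * N) = 0 := by
  rcases eq_or_ne N 0 with rfl | hN
  · simp
  rcases le_total (1 - γ / N) 0 with h | h
  · simp [max_eq_left h]
  · rw [max_eq_right h, sub_sub_cancel, div_mul_cancel₀ _ hN, sub_self, mul_zero]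

section Cylinder

variable {E : Type*} [NormedAddCommGroup E] [InnerProductSpace ℝ E]

noncomputable def cylinderProj (P : E →ₗ[ℝ] E) (γ : ℝ) (x : E) : E :=
  x - max 0 (1 - γ / ‖P x‖) • P x

variable {P : E →ₗ[ℝ] E} {γ : ℝ}

theorem sub_cylinderProj (x : E) : x - cylinderProj P γ x = max 0 (1 - γ / ‖P x‖) • P x :=
  sub_sub_cancel _ _

theorem IsIdempotentElem.map_cylinderProj (hP : IsIdempotentElem P) (x : E) :
    P (cylinderProj P γ x) = (1 - max 0 (1 - γ / ‖P x‖)) • P x := by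
  have hPx : P (P x) = P x := LinearMap.congr_fun hP.eq x
  rw [cylinderProj, map_sub, map_smul, hPx, sub_smul, one_smul]

theorem norm_map_cylinderProj_le (hP : IsIdempotentElem P) (hγ : 0 ≤ γ) (x : E) :
    ‖P (cylinderProj P γ x)‖ ≤ γ := by
  have ht : 0 ≤ 1 - max 0 (1 - γ / ‖P x‖) := by
    rw [sub_nonneg, max_le_iff]
    exact ⟨zero_le_one, sub_le_self _ (div_nonneg hγ (norm_nonneg _))⟩
  rw [hP.map_cylinderProj, norm_smul, Real.norm_of_nonneg ht]
  exact one_sub_max_mul_le hγ (norm_nonneg _)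

theorem inner_sub_cylinderProj_nonpos (hP : P.IsSymmetricProjection) {x y : E}
    (hy : ‖P y‖ ≤ γ) : ⟪x - cylinderProj P γ x, y - cylinderProj P γ x⟫ ≤ 0 := by
  set t := max 0 (1 - γ / ‖P x‖)
  have hPx : P (P x) = P x := LinearMap.congr_fun hP.isIdempotentElem.eq x
  -- the residual `t • P x` lies in the range of `P`, so only `P y` is seen
  have hrange (z : E) : ⟪P x, z⟫ = ⟪P x, P z⟫ := by
    rw [← hP.isSymmetric, hPx]
  have hCS : ⟪P x, P y⟫ ≤ ‖P x‖ * γ :=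
    (real_inner_le_norm _ _).trans (mul_le_mul_of_nonneg_left hy (norm_nonneg _))
  calc ⟪x - cylinderProj P γ x, y - cylinderProj P γ x⟫
      = t * (⟪P x, P y⟫ - (1 - t) * ‖P x‖ ^ 2) := by
        rw [sub_cylinderProj, real_inner_smul_left, hrange, map_sub,
          hP.isIdempotentElem.map_cylinderProj, inner_sub_right, real_inner_smul_right,
          real_inner_self_eq_norm_sq]
    _ ≤ t * (‖P x‖ * γ - (1 - t) * ‖P x‖ ^ 2) := by gcongr
    _ = t * ‖P x‖ * (γ - (1 - t) * ‖P x‖) := by ring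
    _ = 0 := max_mul_mul_sub_eq_zero γ ‖P x‖

end Cylinder

namespace Matrix

/-- For `M = 1` these are the Frobenius norm and inner product. -/
noncomputable abbrev traceNormedAddCommGroup {d : ℕ} :
    NormedAddCommGroup (Matrix (Fin d) (Fin d) ℝ) :=
  toMatrixNormedAddCommGroup 1 PosDef.one

noncomputable abbrev traceInnerProductSpace {d : ℕ} :
    letI := traceNormedAddCommGroup (d := d)
    InnerProductSpace ℝ (Matrix (Fin d) (Fin d) ℝ) :=
  toMatrixInnerProductSpace 1 PosDef.one.posSemidef

end Matrix

attribute [local instance] Matrix.traceNormedAddCommGroup Matrix.traceInnerProductSpace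

section Deviator

open Matrix

variable {d : ℕ}

theorem Matrix.real_inner_eq_trace (A B : Matrix (Fin d) (Fin d) ℝ) :
    ⟪A, B⟫ = trace (B * Aᵀ) := by
  change trace (B * 1 * Aᴴ) = _
  simp

theorem frob_eq_inner {A : Matrix (Fin d) (Fin d) ℝ} (hA : A.IsSymm)
    (B : Matrix (Fin d) (Fin d) ℝ) : frob A B = ⟪A, B⟫ := by
  rw [real_inner_eq_trace, hA.eq, frob, trace_mul_comm]

theorem fnorm_eq_norm {A : Matrix (Fin d) (Fin d) ℝ} (hA : A.IsSymm) : fnorm A = ‖A‖ := by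
  rw [fnorm, frob_eq_inner hA, real_inner_self_eq_norm_sq, Real.sqrt_sq (norm_nonneg _)]

theorem Matrix.IsSymm.dev {A : Matrix (Fin d) (Fin d) ℝ} (hA : A.IsSymm) : (dev A).IsSymm :=
  hA.sub (isSymm_one.smul _)

theorem dev_add (A B : Matrix (Fin d) (Fin d) ℝ) : dev (A + B) = dev A + dev B := by
  simp only [dev, trace_add, add_div, add_smul]
  abel

theorem dev_smul (c : ℝ) (A : Matrix (Fin d) (Fin d) ℝ) : dev (c • A) = c • dev A := by
  rw [dev, dev, trace_smul, smul_eq_mul, mul_div_assoc, smul_sub, smul_smul]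

theorem trace_dev (hd : d ≠ 0) (A : Matrix (Fin d) (Fin d) ℝ) : trace (dev A) = 0 := by
  rw [dev, trace_sub, trace_smul, trace_one, Fintype.card_fin, smul_eq_mul,
    div_mul_cancel₀ _ (Nat.cast_ne_zero.2 hd), sub_self]

theorem dev_of_trace_eq_zero {A : Matrix (Fin d) (Fin d) ℝ} (hA : trace A = 0) : dev A = A := by
  rw [dev, hA, zero_div, zero_smul, sub_zero]

noncomputable def devLinearMap (d : ℕ) :
    Matrix (Fin d) (Fin d) ℝ →ₗ[ℝ] Matrix (Fin d) (Fin d) ℝ where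
  toFun := dev
  map_add' := dev_add
  map_smul' := dev_smul

@[simp]
theorem devLinearMap_apply (A : Matrix (Fin d) (Fin d) ℝ) : devLinearMap d A = dev A := rfl

theorem devLinearMap_isSymmetricProjection (hd : d ≠ 0) :
    (devLinearMap d).IsSymmetricProjection where
  isIdempotentElem := LinearMap.ext fun A => dev_of_trace_eq_zero (trace_dev hd A)
  isSymmetric A B := by
    simp only [devLinearMap_apply, real_inner_eq_trace, dev, transpose_sub, transpose_smul,
      transpose_one, mul_sub, sub_mul, Matrix.mul_smul, Matrix.smul_mul, mul_one, one_mul,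
      trace_sub, trace_smul, trace_transpose, smul_eq_mul]
    ring

theorem projK_eq_cylinderProj (γ : ℝ) {τ : Matrix (Fin d) (Fin d) ℝ} (hτ : τ.IsSymm) :
    projK γ τ = cylinderProj (devLinearMap d) γ τ := by
  rw [projK, cylinderProj, devLinearMap_apply, fnorm_eq_norm hτ.dev]
  split_ifs with h <;> simp [h]

theorem Matrix.IsSymm.cylinderProj_devLinearMap (γ : ℝ) {τ : Matrix (Fin d) (Fin d) ℝ}
    (hτ : τ.IsSymm) : (cylinderProj (devLinearMap d) γ τ).IsSymm :=
  hτ.sub (hτ.dev.smul _)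

end Deviator

/-- Let `γ > 0` and `τ ∈ ℝ^{d×d}_s`.  The point
`p := τ - max{0, 1 - γ/|τ^D|} • τ^D` (with `p := τ` if `τ^D = 0`) belongs to the
von Mises admissible set `K = {σ ∈ ℝ^{d×d}_s : |σ^D| ≤ γ}`, and it is the unique
nearest point of `K` to `τ` in the Frobenius norm: `|τ - p| ≤ |τ - σ|` for all
`σ ∈ K`, with equality only if `σ = p`. -/
theorem projection_onto_vonMises_set
    (d : ℕ) (hd : 0 < d) (γ : ℝ) (hγ : 0 < γ)
    (τ : Matrix (Fin d) (Fin d) ℝ) (hτ : τ.IsSymm) :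
    ((projK γ τ).IsSymm ∧ fnorm (dev (projK γ τ)) ≤ γ) ∧
    ∀ σ : Matrix (Fin d) (Fin d) ℝ, σ.IsSymm → fnorm (dev σ) ≤ γ →
      fnorm (τ - projK γ τ) ≤ fnorm (τ - σ) ∧
      (fnorm (τ - projK γ τ) = fnorm (τ - σ) → σ = projK γ τ) := by
  have hP := devLinearMap_isSymmetricProjection hd.ne'
  have hp := projK_eq_cylinderProj γ hτ
  have hpS : (projK γ τ).IsSymm := hp ▸ hτ.cylinderProj_devLinearMap γ
  refine ⟨⟨hpS, ?_⟩, fun σ hσ hσγ => ?_⟩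
  · rw [fnorm_eq_norm hpS.dev, hp, ← devLinearMap_apply]
    exact norm_map_cylinderProj_le hP.isIdempotentElem hγ.le τ
  · rw [fnorm_eq_norm hσ.dev, ← devLinearMap_apply] at hσγ
    have hvi : ⟪τ - projK γ τ, σ - projK γ τ⟫ ≤ 0 := hp ▸ inner_sub_cylinderProj_nonpos hP hσγ
    rw [fnorm_eq_norm (hτ.sub hpS), fnorm_eq_norm (hτ.sub hσ)]
    exact ⟨norm_sub_le_of_inner_nonpos hvi, eq_of_inner_nonpos_of_norm_sub_eq hvi⟩
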